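/- Every sequence recognized by a polynomially ambiguous weighted automaton over a unary alphabet belongs to PolyRat. -/

import Mathlib

/-!
Polynomial ambiguity forbids two distinct cycles through an accessible and coaccessible state:
pumping them independently `k` times would give `2 ^ k` accepting runs of length linear in `k`.
So on such states the cycle successor is a function, every cycle follows it, and its period
divides `d!`. Hence in `B = M ^ d!` a nonzero off-diagonal entry `B p q'` with `p` accessible and
`q'` coaccessible leaves the strongly connected component of `p` for good. By well-founded
induction along reachability, each entry `n ↦ (Bⁿ) q q'` then satisfies a recurrence
`x (n + 1) = B q' q' * x n + (combination of lower entries)`, so it is eventually an exponential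
polynomial, and these lie in `PolyRat`. Finally `u` is the shuffle of the `d!` sequences
`n ↦ u (d! * n + r) = I ⬝ᵥ (Bⁿ *ᵥ (Mʳ *ᵥ F))`.
-/

/-- The smallest class of sequences `ℕ → ℚ` containing all arithmetic and all geometric
sequences and closed under sum, Hadamard product, shift, and `k`-ary shuffle for `k ≥ 1`. -/
inductive PolyRat : (ℕ → ℚ) → Prop where
  | arith (a b : ℚ) (u : ℕ → ℚ) (h0 : u 0 = a) (hs : ∀ n, u (n + 1) = u n + b) : PolyRat u
  | geo (a l : ℚ) (u : ℕ → ℚ) (h0 : u 0 = a) (hs : ∀ n, u (n + 1) = l * u n) : PolyRat u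
  | sum (u v : ℕ → ℚ) (hu : PolyRat u) (hv : PolyRat v) : PolyRat (fun n => u n + v n)
  | had (u v : ℕ → ℚ) (hu : PolyRat u) (hv : PolyRat v) : PolyRat (fun n => u n * v n)
  | shift (a : ℚ) (u w : ℕ → ℚ) (hu : PolyRat u) (h0 : w 0 = a)
      (hs : ∀ n, w (n + 1) = u n) : PolyRat w
  | shuffle (k : ℕ) (hk : 1 ≤ k) (us : Fin k → ℕ → ℚ) (w : ℕ → ℚ)
      (hw : ∀ (n : ℕ) (i : Fin k), w (k * n + (i : ℕ)) = us i n)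
      (hus : ∀ i, PolyRat (us i)) : PolyRat w

/-- The weighted automaton with states `Fin d`, transition matrix `M`, initial vector `I`
and final vector `F` recognizes the sequence `u`, i.e. `u n = Iᵀ · Mⁿ · F`. -/
def Recognizes {d : ℕ} (M : Matrix (Fin d) (Fin d) ℚ) (I F : Fin d → ℚ) (u : ℕ → ℚ) : Prop :=
  ∀ n : ℕ, u n = dotProduct I ((M ^ n).mulVec F)

/-- `r` is an accepting run of length `n` of the weighted automaton `(Fin d, M, I, F)`. -/
def AcceptingRun {d : ℕ} (M : Matrix (Fin d) (Fin d) ℚ) (I F : Fin d → ℚ) (n : ℕ)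
    (r : Fin (n + 1) → Fin d) : Prop :=
  I (r 0) ≠ 0 ∧ F (r (Fin.last n)) ≠ 0 ∧ ∀ i : Fin n, M (r i.castSucc) (r i.succ) ≠ 0

/-- The ambiguity of a weighted automaton: the number of accepting runs of length `n`. -/
noncomputable def ambiguity {d : ℕ} (M : Matrix (Fin d) (Fin d) ℚ) (I F : Fin d → ℚ)
    (n : ℕ) : ℕ :=
  Nat.card {r : Fin (n + 1) → Fin d // AcceptingRun M I F n r}

/-- A weighted automaton is polynomially ambiguous if its ambiguity is bounded by a
polynomial in the input length. -/
def PolyAmbiguous {d : ℕ} (M : Matrix (Fin d) (Fin d) ℚ) (I F : Fin d → ℚ) : Prop :=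
  ∃ P : Polynomial ℕ, ∀ n : ℕ, ambiguity M I F n ≤ P.eval n

open Filter Finset Matrix

section ExpPoly

variable {K : Type*} [Field K]

variable (K) in
/-- Exponential polynomials `n ↦ ∑ pᵢ(n) cᵢⁿ`, spanned in the binomial basis `(n choose j) cⁿ`,
in which first-order linear recurrences are solved coefficientwise. -/
def expPoly : Submodule K (ℕ → K) :=
  Submodule.span K (Set.range fun jc : ℕ × K => fun n => (n.choose jc.1 : K) * jc.2 ^ n)

theorem choose_mul_pow_mem_expPoly (j : ℕ) (c : K) :
    (fun n => (n.choose j : K) * c ^ n) ∈ expPoly K :=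
  Submodule.subset_span ⟨(j, c), rfl⟩

variable (K) in
def eventuallyExpPoly : Submodule K (ℕ → K) where
  carrier := {f | ∃ g ∈ expPoly K, f =ᶠ[atTop] g}
  add_mem' := by
    rintro f f' ⟨g, hg, hfg⟩ ⟨g', hg', hfg'⟩
    exact ⟨g + g', add_mem hg hg', hfg.add hfg'⟩
  zero_mem' := ⟨0, zero_mem _, EventuallyEq.rfl⟩
  smul_mem' := by
    rintro c f ⟨g, hg, hfg⟩
    exact ⟨c • g, Submodule.smul_mem _ c hg, hfg.const_smul c⟩

theorem expPoly_le_eventuallyExpPoly : expPoly K ≤ eventuallyExpPoly K :=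
  fun g hg => ⟨g, hg, EventuallyEq.rfl⟩

theorem exists_expPoly_recurrence_of_ne {a c : K} (hac : c ≠ a) (j : ℕ) :
    ∃ G ∈ expPoly K, ∀ n, G (n + 1) = a * G n + n.choose j * c ^ n := by
  have hca : c - a ≠ 0 := sub_ne_zero.mpr hac
  induction j with
  | zero =>
    refine ⟨(c - a)⁻¹ • fun n => (n.choose 0 : K) * c ^ n,
      Submodule.smul_mem _ _ (choose_mul_pow_mem_expPoly 0 c), fun n => ?_⟩
    simp only [Pi.smul_apply, smul_eq_mul, Nat.choose_zero_right]
    field_simp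
    ring
  | succ j ih =>
    obtain ⟨G, hG, hrec⟩ := ih
    -- Pascal's rule leaves a term `c (c - a)⁻¹ (n.choose j) cⁿ`, which `G` cancels.
    refine ⟨(c - a)⁻¹ • ((fun n => (n.choose (j + 1) : K) * c ^ n) - c • G),
      Submodule.smul_mem _ _ (sub_mem (choose_mul_pow_mem_expPoly _ _)
        (Submodule.smul_mem _ _ hG)), fun n => ?_⟩
    simp only [Pi.smul_apply, Pi.sub_apply, smul_eq_mul, hrec, Nat.choose_succ_succ',
      Nat.cast_add]
    field_simp
    ring

theorem exists_expPoly_recurrence (a : K) {g : ℕ → K} (hg : g ∈ expPoly K) :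
    ∃ G ∈ expPoly K, ∀ᶠ n in atTop, G (n + 1) = a * G n + g n := by
  induction hg using Submodule.span_induction with
  | mem g hg =>
    obtain ⟨⟨j, c⟩, rfl⟩ := hg
    by_cases hac : c = a
    · subst hac
      by_cases hc : c = 0
      · refine ⟨0, zero_mem _, (eventually_ge_atTop 1).mono fun n hn => ?_⟩
        simp [hc, zero_pow (Nat.one_le_iff_ne_zero.mp hn)]
      · -- Pascal's rule `(n + 1).choose (j + 1) = n.choose j + n.choose (j + 1)`.
        refine ⟨c⁻¹ • fun n => (n.choose (j + 1) : K) * c ^ n,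
          Submodule.smul_mem _ _ (choose_mul_pow_mem_expPoly _ _),
          Eventually.of_forall fun n => ?_⟩
        simp only [Pi.smul_apply, smul_eq_mul, Nat.choose_succ_succ', Nat.cast_add]
        field_simp
        ring
    · obtain ⟨G, hG, hrec⟩ := exists_expPoly_recurrence_of_ne hac j
      exact ⟨G, hG, Eventually.of_forall hrec⟩
  | zero => exact ⟨0, zero_mem _, Eventually.of_forall fun n => by simp⟩
  | add g g' _ _ ih ih' =>
    obtain ⟨G, hG, hrec⟩ := ih
    obtain ⟨G', hG', hrec'⟩ := ih'
    refine ⟨G + G', add_mem hG hG', (hrec.and hrec').mono fun n ⟨h, h'⟩ => ?_⟩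
    simp only [Pi.add_apply, h, h']
    ring
  | smul r g _ ih =>
    obtain ⟨G, hG, hrec⟩ := ih
    refine ⟨r • G, Submodule.smul_mem _ r hG, hrec.mono fun n h => ?_⟩
    simp only [Pi.smul_apply, smul_eq_mul, h]
    ring

theorem mem_eventuallyExpPoly_of_eventually_eq_mul {a : K} {e : ℕ → K}
    (h : ∀ᶠ n in atTop, e (n + 1) = a * e n) : e ∈ eventuallyExpPoly K := by
  obtain ⟨N, hN⟩ := eventually_atTop.mp h
  have hgeom : ∀ m, e (N + m) = e N * a ^ m := by
    intro m
    induction m with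
    | zero => simp
    | succ m ih => rw [← add_assoc, hN _ (by omega), ih, pow_succ]; ring
  by_cases ha : a = 0
  · refine ⟨0, zero_mem _, eventually_atTop.mpr ⟨N + 1, fun n hn => ?_⟩⟩
    obtain ⟨m, rfl⟩ := Nat.exists_eq_add_of_le hn
    rw [add_assoc, hgeom, ha, zero_pow (by omega)]
    simp
  · refine ⟨(e N / a ^ N) • fun n => (n.choose 0 : K) * a ^ n,
      Submodule.smul_mem _ _ (choose_mul_pow_mem_expPoly 0 a),
      eventually_atTop.mpr ⟨N, fun n hn => ?_⟩⟩
    obtain ⟨m, rfl⟩ := Nat.exists_eq_add_of_le hn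
    simp only [hgeom, Pi.smul_apply, smul_eq_mul, Nat.choose_zero_right, Nat.cast_one, one_mul,
      pow_add]
    field_simp

theorem mem_eventuallyExpPoly_of_recurrence {a : K} {f h : ℕ → K}
    (hrec : ∀ n, f (n + 1) = a * f n + h n) (hh : h ∈ eventuallyExpPoly K) :
    f ∈ eventuallyExpPoly K := by
  obtain ⟨g, hg, hhg⟩ := hh
  obtain ⟨G, hG, hGrec⟩ := exists_expPoly_recurrence a hg
  have he : f - G ∈ eventuallyExpPoly K :=
    mem_eventuallyExpPoly_of_eventually_eq_mul <| (hhg.and hGrec).mono fun n ⟨h₁, h₂⟩ => by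
      simp only [Pi.sub_apply, hrec, h₁, h₂]
      ring
  simpa using add_mem he (expPoly_le_eventuallyExpPoly hG)

variable {ι : Type*} [Fintype ι] [DecidableEq ι]

theorem pow_apply_mem_eventuallyExpPoly (B : Matrix ι ι K) (i j : ι)
    (h : ∀ p ≠ j, B p j ≠ 0 → (fun n => (B ^ n) i p) ∈ eventuallyExpPoly K) :
    (fun n => (B ^ n) i j) ∈ eventuallyExpPoly K := by
  refine mem_eventuallyExpPoly_of_recurrence (a := B j j)
    (h := ∑ p ∈ univ.erase j, B p j • fun n => (B ^ n) i p) (fun n => ?_)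
    (sum_mem fun p hp => ?_)
  · rw [pow_succ, Matrix.mul_apply, ← add_sum_erase _ _ (mem_univ j)]
    simp [Finset.sum_apply, mul_comm]
  · by_cases hpj : B p j = 0
    · simp [hpj]
    · exact Submodule.smul_mem _ _ (h p (ne_of_mem_erase hp) hpj)

theorem dotProduct_pow_mulVec_mem_eventuallyExpPoly (B : Matrix ι ι K) (v w : ι → K)
    (h : ∀ i j, v i ≠ 0 → w j ≠ 0 → (fun n => (B ^ n) i j) ∈ eventuallyExpPoly K) :
    (fun n => v ⬝ᵥ (B ^ n *ᵥ w)) ∈ eventuallyExpPoly K := by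
  have hsum :
      (fun n => v ⬝ᵥ (B ^ n *ᵥ w)) = ∑ i, ∑ j, (v i * w j) • fun n => (B ^ n) i j := by
    ext n
    simp only [dotProduct, mulVec, Finset.sum_apply, Pi.smul_apply, smul_eq_mul, Finset.mul_sum]
    exact sum_congr rfl fun i _ => sum_congr rfl fun j _ => by ring
  rw [hsum]
  refine sum_mem fun i _ => sum_mem fun j _ => ?_
  by_cases hi : v i = 0
  · simp [hi]
  by_cases hj : w j = 0
  · simp [hj]
  exact Submodule.smul_mem _ _ (h i j hi hj)

end ExpPoly

namespace PolyRat

theorem const (c : ℚ) : PolyRat fun _ => c :=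
  arith c 0 _ rfl fun _ => by ring

theorem of_eventually_eq_zero {e : ℕ → ℚ} (N : ℕ) (he : ∀ n ≥ N, e n = 0) : PolyRat e := by
  induction N generalizing e with
  | zero =>
    exact arith 0 0 e (he 0 le_rfl) fun n => by rw [he n (by omega), he (n + 1) (by omega)]; ring
  | succ N ih =>
    exact shift (e 0) _ e (ih (e := fun n => e (n + 1)) fun n hn => he _ (by omega)) rfl
      fun _ => rfl

theorem choose (j : ℕ) : PolyRat fun n => (n.choose j : ℚ) := by
  induction j with
  | zero => simpa using const 1
  | succ j ih =>
    -- This also holds for `n < j`, where both sides vanish.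
    have hfactor : ∀ n : ℕ, (n.choose (j + 1) : ℚ) = n.choose j * (((n : ℚ) - j) / (j + 1)) := by
      intro n
      rcases le_or_gt j n with hjn | hnj
      · have h : ((n.choose (j + 1) * (j + 1) : ℕ) : ℚ) = (n.choose j * (n - j) : ℕ) :=
          congrArg _ (Nat.choose_succ_right_eq n j)
        push_cast [Nat.cast_sub hjn] at h
        field_simp
        linarith
      · simp [Nat.choose_eq_zero_of_lt hnj, Nat.choose_eq_zero_of_lt (hnj.trans j.lt_succ_self)]
    have harith : PolyRat fun n : ℕ => ((n : ℚ) - j) / (j + 1) :=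
      arith _ (1 / (j + 1)) _ rfl fun n => by push_cast; ring
    simpa only [hfactor] using had _ _ ih harith

theorem of_mem_expPoly {g : ℕ → ℚ} (hg : g ∈ expPoly ℚ) : PolyRat g := by
  induction hg using Submodule.span_induction with
  | mem g hg =>
    obtain ⟨⟨j, c⟩, rfl⟩ := hg
    exact had _ _ (choose j) (geo 1 c _ (pow_zero c) fun n => pow_succ' c n)
  | zero => exact const 0
  | add g g' _ _ ih ih' => exact sum g g' ih ih'
  | smul r g _ ih => exact had _ g (const r) ih

theorem of_mem_eventuallyExpPoly {f : ℕ → ℚ} (hf : f ∈ eventuallyExpPoly ℚ) : PolyRat f := by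
  obtain ⟨g, hg, hfg⟩ := hf
  obtain ⟨N, hN⟩ := eventually_atTop.mp hfg
  have hfg : PolyRat (f - g) := of_eventually_eq_zero N fun n hn => by simp [hN n hn]
  simpa using sum g (f - g) (of_mem_expPoly hg) hfg

end PolyRat

theorem Polynomial.exists_eval_lt_two_pow (Q : Polynomial ℕ) : ∃ k, Q.eval k < 2 ^ k := by
  set D := Q.natDegree
  have hbound : ∀ k, 1 ≤ k → Q.eval k ≤ Q.eval 1 * k ^ D := by
    intro k hk
    calc Q.eval k = ∑ i ∈ range (D + 1), Q.coeff i * k ^ i := eval_eq_sum_range k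
      _ ≤ ∑ i ∈ range (D + 1), Q.coeff i * k ^ D := sum_le_sum fun i hi =>
          Nat.mul_le_mul_left _ (Nat.pow_le_pow_right hk (Nat.lt_succ_iff.mp (mem_range.mp hi)))
      _ = Q.eval 1 * k ^ D := by rw [eval_eq_sum_range, sum_mul]; simp [D]
  have hlim := (tendsto_pow_const_div_const_pow_of_one_lt D one_lt_two).eventually
    (gt_mem_nhds (show (0 : ℝ) < 1 / (Q.eval 1 + 1) by positivity))
  obtain ⟨k, hk1, hk⟩ := ((eventually_ge_atTop 1).and hlim).exists
  refine ⟨k, (hbound k hk1).trans_lt ?_⟩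
  rw [div_lt_div_iff₀ (by positivity) (by positivity)] at hk
  have : ((Q.eval 1 * k ^ D : ℕ) : ℝ) < 2 ^ k := by
    push_cast
    nlinarith [pow_nonneg (Nat.cast_nonneg (α := ℝ) k) D]
  exact_mod_cast this

section Walks

variable {ι R : Type*}

section Zero

variable [Zero R] (M : Matrix ι ι R)

/-- Walks are sequences `ℕ → ι` of which only the values at `0, …, n` matter. -/
def IsWalk (n : ℕ) (w : ℕ → ι) : Prop :=
  ∀ i < n, M (w i) (w (i + 1)) ≠ 0

def HasWalk (n : ℕ) (p q : ι) : Prop :=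
  ∃ w, w 0 = p ∧ w n = q ∧ IsWalk M n w

def Reaches (p q : ι) : Prop :=
  ∃ n, HasWalk M n p q

def concatWalk (w : ℕ → ι) (m : ℕ) (w' : ℕ → ι) (i : ℕ) : ι :=
  if i ≤ m then w i else w' (i - m)

variable {M}

theorem concatWalk_of_le {w w' : ℕ → ι} {m i : ℕ} (h : i ≤ m) : concatWalk w m w' i = w i :=
  if_pos h

theorem concatWalk_add {w w' : ℕ → ι} {m : ℕ} (h : w m = w' 0) (i : ℕ) :
    concatWalk w m w' (m + i) = w' i := by
  unfold concatWalk
  split_ifs with hi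
  · obtain rfl : i = 0 := by omega
    simpa using h
  · simp

theorem IsWalk.concat {w w' : ℕ → ι} {m n : ℕ} (hw : IsWalk M m w) (hw' : IsWalk M n w')
    (h : w m = w' 0) : IsWalk M (m + n) (concatWalk w m w') := by
  intro i hi
  rcases lt_or_ge i m with him | him
  · rw [concatWalk_of_le him.le, concatWalk_of_le him]
    exact hw i him
  · obtain ⟨j, rfl⟩ := Nat.exists_eq_add_of_le him
    rw [add_assoc, concatWalk_add h, concatWalk_add h]
    exact hw' j (by omega)

theorem isWalk_edge {p q : ι} (h : M p q ≠ 0) : IsWalk M 1 fun i => if i = 0 then p else q := by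
  intro i hi
  obtain rfl : i = 0 := by omega
  simpa using h

theorem hasWalk_zero (p : ι) : HasWalk M 0 p p :=
  ⟨fun _ => p, rfl, rfl, fun _ hi => absurd hi (Nat.not_lt_zero _)⟩

theorem HasWalk.eq_of_zero {p q : ι} (h : HasWalk M 0 p q) : p = q := by
  obtain ⟨w, h0, h0', -⟩ := h
  exact h0.symm.trans h0'

theorem hasWalk_one {p q : ι} (h : M p q ≠ 0) : HasWalk M 1 p q :=
  ⟨_, rfl, rfl, isWalk_edge h⟩

theorem HasWalk.trans {p q r : ι} {m n : ℕ} (h : HasWalk M m p q) (h' : HasWalk M n q r) :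
    HasWalk M (m + n) p r := by
  obtain ⟨w, hw0, hwm, hw⟩ := h
  obtain ⟨w', hw'0, hw'n, hw'⟩ := h'
  have hjoin : w m = w' 0 := hwm.trans hw'0.symm
  exact ⟨concatWalk w m w', (concatWalk_of_le (Nat.zero_le m)).trans hw0,
    (concatWalk_add hjoin n).trans hw'n, hw.concat hw' hjoin⟩

theorem HasWalk.exists_last {p q : ι} {n : ℕ} (h : HasWalk M (n + 1) p q) :
    ∃ x, HasWalk M n p x ∧ M x q ≠ 0 := by
  obtain ⟨w, hw0, hwn, hw⟩ := h
  exact ⟨w n, ⟨w, hw0, rfl, fun i hi => hw i (by omega)⟩, hwn ▸ hw n (Nat.lt_succ_self n)⟩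

theorem exists_walk_cons {q a r : ι} {m : ℕ} (ha : M q a ≠ 0) (h : HasWalk M m a r) :
    ∃ c, c 0 = q ∧ c 1 = a ∧ c (1 + m) = r ∧ IsWalk M (1 + m) c := by
  obtain ⟨w, hw0, hwm, hw⟩ := h
  have hjoin : (if 1 = 0 then q else a) = w 0 := hw0.symm
  exact ⟨concatWalk _ 1 w, concatWalk_of_le (Nat.zero_le 1), concatWalk_of_le le_rfl,
    (concatWalk_add hjoin m).trans hwm, (isWalk_edge ha).concat hw hjoin⟩

theorem Reaches.refl (p : ι) : Reaches M p p :=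
  ⟨0, hasWalk_zero p⟩

theorem Reaches.trans {p q r : ι} (h : Reaches M p q) (h' : Reaches M q r) : Reaches M p r :=
  let ⟨_, hm⟩ := h
  let ⟨_, hn⟩ := h'
  ⟨_, hm.trans hn⟩

theorem Reaches.of_ne_zero {p q : ι} (h : M p q ≠ 0) : Reaches M p q :=
  ⟨1, hasWalk_one h⟩

def blockWalk {β : Type*} (c : β → ℕ → ι) (ℓ : ℕ) (v : ℕ → β) (i : ℕ) : ι :=
  c (v (i / ℓ)) (i % ℓ)

theorem blockWalk_mul_add {β : Type*} (c : β → ℕ → ι) {ℓ j : ℕ} (v : ℕ → β) (t : ℕ)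
    (hj : j < ℓ) : blockWalk c ℓ v (ℓ * t + j) = c (v t) j := by
  simp [blockWalk, Nat.mul_add_div (by omega : 0 < ℓ), Nat.div_eq_of_lt hj, Nat.mod_eq_of_lt hj]

theorem isWalk_blockWalk {β : Type*} {c : β → ℕ → ι} {ℓ : ℕ} {q : ι}
    (hℓ : 0 < ℓ) (hc : ∀ b, c b 0 = q ∧ c b ℓ = q ∧ IsWalk M ℓ (c b)) (v : ℕ → β) (n : ℕ) :
    IsWalk M n (blockWalk c ℓ v) := by
  intro i _
  obtain ⟨t, j, hj, rfl⟩ : ∃ t j, j < ℓ ∧ i = ℓ * t + j :=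
    ⟨i / ℓ, i % ℓ, Nat.mod_lt i hℓ, (Nat.div_add_mod i ℓ).symm⟩
  rw [blockWalk_mul_add c v t hj]
  rcases lt_or_eq_of_le (Nat.succ_le_of_lt hj) with hj' | hj'
  · rw [add_assoc, blockWalk_mul_add c v t hj']
    exact (hc (v t)).2.2 j hj
  · have hnext : ℓ * t + j + 1 = ℓ * (t + 1) + 0 := by rw [mul_add, mul_one]; omega
    rw [hnext, blockWalk_mul_add c v (t + 1) hℓ, (hc _).1, ← (hc (v t)).2.1, ← hj']
    exact (hc (v t)).2.2 j hj

end Zero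

theorem hasWalk_of_pow_apply_ne_zero [Semiring R] [Fintype ι] [DecidableEq ι]
    (M : Matrix ι ι R) {n : ℕ} {p q : ι} (h : (M ^ n) p q ≠ 0) : HasWalk M n p q := by
  induction n generalizing q with
  | zero =>
    obtain rfl : p = q := by
      by_contra hpq
      exact h (Matrix.one_apply_ne hpq)
    exact hasWalk_zero p
  | succ n ih =>
    rw [pow_succ, Matrix.mul_apply] at h
    obtain ⟨x, -, hx⟩ := exists_ne_zero_of_sum_ne_zero h
    exact (ih (left_ne_zero_of_mul hx)).trans (hasWalk_one (right_ne_zero_of_mul hx))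

end Walks

section Automaton

variable {d : ℕ} (M : Matrix (Fin d) (Fin d) ℚ) (I F : Fin d → ℚ)

def IsAccessible (q : Fin d) : Prop :=
  ∃ q₀, I q₀ ≠ 0 ∧ Reaches M q₀ q

def IsCoaccessible (q : Fin d) : Prop :=
  ∃ q₁, F q₁ ≠ 0 ∧ Reaches M q q₁

variable {M I F}

theorem acceptingRun_of_isWalk {n : ℕ} {w : ℕ → Fin d} (hw : IsWalk M n w) (h0 : I (w 0) ≠ 0)
    (hn : F (w n) ≠ 0) : AcceptingRun M I F n fun i => w i :=
  ⟨h0, hn, fun i => hw i i.isLt⟩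

theorem natCard_le_ambiguity {J : Type*} {q q₀ q₁ : Fin d} {a m b : ℕ}
    (hI : I q₀ ≠ 0) (hpre : HasWalk M a q₀ q) (hF : F q₁ ≠ 0) (hsuf : HasWalk M b q q₁)
    (f : J → ℕ → Fin d) (hf : ∀ j, f j 0 = q ∧ f j m = q ∧ IsWalk M m (f j))
    (hinj : ∀ j j', (∀ i ≤ m, f j i = f j' i) → j = j') :
    Nat.card J ≤ ambiguity M I F (a + m + b) := by
  obtain ⟨p, hp0, hpa, hp⟩ := hpre
  obtain ⟨s, hs0, hsb, hs⟩ := hsuf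
  let run (j : J) : ℕ → Fin d := concatWalk (concatWalk p a (f j)) (a + m) s
  have hjoin₁ : ∀ j, p a = f j 0 := fun j => hpa.trans (hf j).1.symm
  have hjoin₂ : ∀ j, concatWalk p a (f j) (a + m) = s 0 := fun j =>
    (concatWalk_add (hjoin₁ j) m).trans ((hf j).2.1.trans hs0.symm)
  have hrun_mid : ∀ j, ∀ i ≤ m, run j (a + i) = f j i := fun j i hi =>
    (concatWalk_of_le (by omega)).trans (concatWalk_add (hjoin₁ j) i)
  have hrun : ∀ j, AcceptingRun M I F (a + m + b) fun i => run j i := fun j =>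
    acceptingRun_of_isWalk ((hp.concat (hf j).2.2 (hjoin₁ j)).concat hs (hjoin₂ j))
      (by simp only [run]; rwa [concatWalk_of_le (Nat.zero_le _), concatWalk_of_le (Nat.zero_le _),
        hp0])
      (by simp only [run]; rwa [concatWalk_add (hjoin₂ j), hsb])
  refine Nat.card_le_card_of_injective (fun j => ⟨_, hrun j⟩) fun j j' h =>
    hinj j j' fun i hi => ?_
  have := congrFun (congrArg Subtype.val h) ⟨a + i, by omega⟩
  simpa only [hrun_mid j i hi, hrun_mid j' i hi] using this

theorem two_pow_le_ambiguity {q q₀ q₁ : Fin d} {a b ℓ j : ℕ}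
    (hI : I q₀ ≠ 0) (hpre : HasWalk M a q₀ q) (hF : F q₁ ≠ 0) (hsuf : HasWalk M b q q₁)
    (c : Bool → ℕ → Fin d) (hc : ∀ β, c β 0 = q ∧ c β ℓ = q ∧ IsWalk M ℓ (c β))
    (hj : j < ℓ) (hne : c true j ≠ c false j) (k : ℕ) :
    2 ^ k ≤ ambiguity M I F (a + ℓ * k + b) := by
  have hℓ : 0 < ℓ := by omega
  let f (v : Fin k → Bool) : ℕ → Fin d :=
    blockWalk c ℓ fun t => if h : t < k then v ⟨t, h⟩ else true
  have hf : ∀ v, f v 0 = q ∧ f v (ℓ * k) = q ∧ IsWalk M (ℓ * k) (f v) := fun v =>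
    ⟨(blockWalk_mul_add c _ 0 hℓ).trans (hc _).1, (blockWalk_mul_add c _ k hℓ).trans (hc _).1,
      isWalk_blockWalk hℓ hc _ _⟩
  calc 2 ^ k = Nat.card (Fin k → Bool) := by simp
    _ ≤ _ := natCard_le_ambiguity hI hpre hF hsuf f hf fun v v' h => funext fun t => ?_
  have hpos : ℓ * t + j ≤ ℓ * k := by
    calc ℓ * t + j ≤ ℓ * (t + 1) := by rw [mul_add, mul_one]; omega
      _ ≤ ℓ * k := Nat.mul_le_mul_left _ t.isLt
  have := h _ hpos
  simp only [f, blockWalk_mul_add c _ _ hj, dif_pos t.isLt] at this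
  cases h₁ : v t <;> cases h₂ : v' t <;> simp_all [Ne.symm hne]

theorem eq_of_mem_cycles (hamb : PolyAmbiguous M I F) {q a b : Fin d}
    (hq₀ : IsAccessible M I q) (hq₁ : IsCoaccessible M F q)
    (ha : M q a ≠ 0) (haq : Reaches M a q) (hb : M q b ≠ 0) (hbq : Reaches M b q) : a = b := by
  by_contra hab
  obtain ⟨q₀, hI, na, hpre⟩ := hq₀
  obtain ⟨q₁, hF, nb, hsuf⟩ := hq₁
  obtain ⟨ma, hma⟩ := haq
  obtain ⟨mb, hmb⟩ := hbq
  obtain ⟨cA, hA0, hA1, hAℓ, hA⟩ := exists_walk_cons ha hma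
  obtain ⟨cB, hB0, hB1, hBℓ, hB⟩ := exists_walk_cons hb hmb
  have hAB : cA (1 + ma) = cB 0 := hAℓ.trans hB0.symm
  have hBA : cB (1 + mb) = cA 0 := hBℓ.trans hA0.symm
  -- The cycles `q → a ⇝ q → b ⇝ q` and `q → b ⇝ q → a ⇝ q` have equal lengths.
  let c (β : Bool) : ℕ → Fin d :=
    if β then concatWalk cA (1 + ma) cB else concatWalk cB (1 + mb) cA
  set ℓ := 1 + ma + (1 + mb)
  have hc : ∀ β, c β 0 = q ∧ c β ℓ = q ∧ IsWalk M ℓ (c β) := by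
    rintro (_ | _)
    · simp only [c, Bool.false_eq_true, ↓reduceIte]
      refine ⟨(concatWalk_of_le (Nat.zero_le _)).trans hB0, ?_, ?_⟩
      · rw [show ℓ = 1 + mb + (1 + ma) by omega]
        exact (concatWalk_add hBA _).trans hAℓ
      · rw [show ℓ = 1 + mb + (1 + ma) by omega]
        exact hB.concat hA hBA
    · simp only [c, ↓reduceIte]
      exact ⟨(concatWalk_of_le (Nat.zero_le _)).trans hA0, (concatWalk_add hAB _).trans hBℓ,
        hA.concat hB hAB⟩
  have hne : c true 1 ≠ c false 1 := by
    simp only [c, Bool.false_eq_true, ↓reduceIte]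
    rwa [concatWalk_of_le (by omega), concatWalk_of_le (by omega), hA1, hB1]
  obtain ⟨P, hP⟩ := hamb
  obtain ⟨k, hk⟩ :=
    (P.comp (Polynomial.C (na + nb) + Polynomial.C ℓ * Polynomial.X)).exists_eval_lt_two_pow
  have hamb_k := (two_pow_le_ambiguity hI hpre hF hsuf c hc (by omega) hne k).trans (hP _)
  simp only [Polynomial.eval_comp, Polynomial.eval_add, Polynomial.eval_mul, Polynomial.eval_C,
    Polynomial.eval_X] at hk
  rw [show na + ℓ * k + nb = na + nb + ℓ * k by ring] at hamb_k
  omega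

variable (M) in
open Classical in
/-- A successor of `q` on a cycle through `q` (junk value `q` if there is none); at accessible
and coaccessible states of a polynomially ambiguous automaton it is unique (`cycleSucc_eq`). -/
noncomputable def cycleSucc (q : Fin d) : Fin d :=
  if h : ∃ a, M q a ≠ 0 ∧ Reaches M a q then h.choose else q

theorem cycleSucc_eq (hamb : PolyAmbiguous M I F) {q a : Fin d} (hq₀ : IsAccessible M I q)
    (hq₁ : IsCoaccessible M F q) (ha : M q a ≠ 0) (haq : Reaches M a q) : cycleSucc M q = a := by
  have h : ∃ a, M q a ≠ 0 ∧ Reaches M a q := ⟨a, ha, haq⟩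
  rw [cycleSucc, dif_pos h]
  exact eq_of_mem_cycles hamb hq₀ hq₁ h.choose_spec.1 h.choose_spec.2 ha haq

theorem eq_iterate_cycleSucc (hamb : PolyAmbiguous M I F) {q p : Fin d} {n : ℕ}
    (hq₀ : IsAccessible M I q) (hq₁ : IsCoaccessible M F q) (h : HasWalk M n q p)
    (hpq : Reaches M p q) : p = (cycleSucc M)^[n] q := by
  induction n generalizing p with
  | zero => exact h.eq_of_zero.symm
  | succ n ih =>
    obtain ⟨x, hx, hxp⟩ := h.exists_last
    have hxq : Reaches M x q := (Reaches.of_ne_zero hxp).trans hpq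
    have hqx : Reaches M q x := ⟨n, hx⟩
    obtain ⟨q₀, hI, hq₀q⟩ := hq₀
    obtain ⟨q₁, hF, hqq₁⟩ := hq₁
    rw [Function.iterate_succ_apply', ← ih hx hxq]
    exact (cycleSucc_eq hamb ⟨q₀, hI, hq₀q.trans hqx⟩ ⟨q₁, hF, hxq.trans hqq₁⟩ hxp
      (hpq.trans hqx)).symm

theorem iterate_factorial_cycleSucc (hamb : PolyAmbiguous M I F) {q : Fin d} {n : ℕ}
    (hq₀ : IsAccessible M I q) (hq₁ : IsCoaccessible M F q) (hn : 0 < n) (h : HasWalk M n q q) :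
    (cycleSucc M)^[d.factorial] q = q := by
  have hper : Function.IsPeriodicPt (cycleSucc M) n q :=
    (eq_iterate_cycleSucc hamb hq₀ hq₁ h (Reaches.refl q)).symm
  have := Function.isPeriodicPt_factorial_card_of_mem_periodicPts
    (Function.mk_mem_periodicPts hn hper)
  rwa [Fintype.card_fin] at this

theorem not_reaches_of_pow_factorial_apply_ne_zero (hamb : PolyAmbiguous M I F) {q q' : Fin d}
    (hq₀ : IsAccessible M I q) (hq₁ : IsCoaccessible M F q) (hqq' : q ≠ q')
    (h : (M ^ d.factorial) q q' ≠ 0) : ¬ Reaches M q' q := by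
  rintro ⟨m, hm⟩
  have hw := hasWalk_of_pow_apply_ne_zero M h
  refine hqq' ((eq_iterate_cycleSucc hamb hq₀ hq₁ hw ⟨m, hm⟩).trans ?_).symm
  exact iterate_factorial_cycleSucc hamb hq₀ hq₁ (by positivity) (hw.trans hm)

theorem pow_factorial_pow_apply_mem_eventuallyExpPoly (hamb : PolyAmbiguous M I F) {q q' : Fin d}
    (hq : IsAccessible M I q) (hq' : IsCoaccessible M F q') :
    (fun n => ((M ^ d.factorial) ^ n) q q') ∈ eventuallyExpPoly ℚ := by
  let below : Fin d → Fin d → Prop := fun p p' => Reaches M p p' ∧ ¬ Reaches M p' p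
  have : IsTrans (Fin d) below :=
    ⟨fun _ _ _ h h' => ⟨h.1.trans h'.1, fun h'' => h.2 (h'.1.trans h'')⟩⟩
  have : Std.Irrefl below := ⟨fun p hp => hp.2 (Reaches.refl p)⟩
  induction q' using (Finite.wellFounded_of_trans_of_irrefl below).induction with
  | _ q' ih =>
    refine pow_apply_mem_eventuallyExpPoly _ q q' fun p hpq' hp => ?_
    have hreach : Reaches M p q' := ⟨_, hasWalk_of_pow_apply_ne_zero M hp⟩
    obtain ⟨q₁, hF, hq'q₁⟩ := hq'
    have hp₁ : IsCoaccessible M F p := ⟨q₁, hF, hreach.trans hq'q₁⟩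
    by_cases hp₀ : IsAccessible M I p
    · exact ih p ⟨hreach, not_reaches_of_pow_factorial_apply_ne_zero hamb hp₀ hp₁ hpq' hp⟩ hp₁
    · have hzero : ∀ n, ((M ^ d.factorial) ^ n) q p = 0 := by
        intro n
        by_contra hn
        rw [← pow_mul] at hn
        obtain ⟨q₀, hI, hq₀q⟩ := hq
        exact hp₀ ⟨q₀, hI, hq₀q.trans ⟨_, hasWalk_of_pow_apply_ne_zero M hn⟩⟩
      rw [show (fun n => ((M ^ d.factorial) ^ n) q p) = 0 from funext hzero]
      exact zero_mem _

theorem isCoaccessible_of_pow_mulVec_ne_zero {r : ℕ} {q : Fin d} (h : (M ^ r *ᵥ F) q ≠ 0) :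
    IsCoaccessible M F q := by
  simp only [mulVec, dotProduct] at h
  obtain ⟨p, -, hp⟩ := exists_ne_zero_of_sum_ne_zero h
  exact ⟨p, right_ne_zero_of_mul hp, _, hasWalk_of_pow_apply_ne_zero M (left_ne_zero_of_mul hp)⟩

end Automaton

/-- Every sequence recognized by a polynomially ambiguous weighted automaton
over a unary alphabet belongs to PolyRat. -/
theorem polyAmbiguous_wa_recognized_mem_polyRat (u : ℕ → ℚ) (d : ℕ)
    (M : Matrix (Fin d) (Fin d) ℚ) (I F : Fin d → ℚ)
    (hrec : Recognizes M I F u) (hamb : PolyAmbiguous M I F) :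
    PolyRat u := by
  refine PolyRat.shuffle d.factorial d.factorial_pos (fun r n => u (d.factorial * n + r)) u
    (fun _ _ => rfl) fun r => PolyRat.of_mem_eventuallyExpPoly ?_
  have hu : (fun n => u (d.factorial * n + r)) =
      fun n => I ⬝ᵥ ((M ^ d.factorial) ^ n *ᵥ (M ^ (r : ℕ) *ᵥ F)) := by
    funext n
    rw [hrec, pow_add, pow_mul, mulVec_mulVec]
  rw [hu]
  exact dotProduct_pow_mulVec_mem_eventuallyExpPoly _ _ _ fun q q' hq hq' =>
    pow_factorial_pow_apply_mem_eventuallyExpPoly hamb ⟨q, hq, Reaches.refl q⟩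
      (isCoaccessible_of_pow_mulVec_ne_zero hq')
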